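/- Let M and M₀ be positive integers with M₀ dividing M, set d = M/M₀, fix an offset s with 0 ≤ s < d, and let F̄ be the M₀×M partial DFT matrix with entries F̄_{i,k} = exp(−2πi·(s + i·d)·k / M). Let K ≤ M₀ and let G be a fixed M×(N+1) complex matrix whose rows with index ≥ K are zero. Let (Ω, 𝒫) be a probability space, let x : Ω → ℂ^{M₀} be a square-integrable random vector with E[|x_i|²] = P/M for every coordinate i (P > 0 a constant), and let z : Ω → ℂ^{M₀} be a square-integrable random vector independent of x with E[z] = 0 and E[‖z‖²] = M₀·σ². Then for every v ∈ ℂ^{N+1}: (1/M₀)·E[‖diag(x)·F̄ G v + z‖²] = (P/M)·vᴴ Gᴴ G v + σ². -/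

import Mathlib

open Matrix MeasureTheory ProbabilityTheory

/-!
Put `w = G v` and `y = F̄ w`. Since `w` vanishes beyond its first `K ≤ M₀` taps, only the first
`M₀` columns of `F̄` matter, and these are orthogonal with squared norm `M₀`: the inner product
of columns `k` and `l` is a geometric sum of powers of the `M₀`-th root of unity
`exp (2πi (k - l) / M₀)`. Hence `‖y‖² = M₀ ‖w‖² = M₀ vᴴ Gᴴ G v`. Coordinatewise, independence of
`x` and `z` together with `E z = 0` kills the cross term, so
`E |x_i y_i + z_i|² = |y_i|² E |x_i|² + E |z_i|²`; summing over `i` gives `(P/M) ‖y‖² + M₀ σ²`.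
-/

theorem IsPrimitiveRoot.sum_range_pow_zpow_eq_zero {K : Type*} [Field K] {ζ : K} {n : ℕ}
    (hζ : IsPrimitiveRoot ζ n) {t : ℤ} (ht : ¬ (n : ℤ) ∣ t) :
    ∑ i ∈ Finset.range n, (ζ ^ t) ^ i = 0 := by
  have h1 : ζ ^ t ≠ 1 := mt (hζ.zpow_eq_one_iff_dvd t).1 ht
  rw [geom_sum_eq h1, ← zpow_natCast, ← _root_.zpow_mul, mul_comm, _root_.zpow_mul,
    hζ.zpow_eq_one, _root_.one_zpow, sub_self, zero_div]

section LinearAlgebra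

variable {n R : Type*} [Fintype n] [CommSemiring R] [StarRing R]

theorem star_mulVec_dotProduct_mulVec {m : Type*} [Fintype m] (A : Matrix m n R) (w : n → R) :
    star (A *ᵥ w) ⬝ᵥ (A *ᵥ w) = star w ⬝ᵥ (Aᴴ * A) *ᵥ w := by
  rw [star_mulVec, ← dotProduct_mulVec, mulVec_mulVec]

theorem dotProduct_mulVec_eq_mul_of_support [DecidableEq n] {A : Matrix n n R} {w : n → R}
    {p : n → Prop} (c : R) (hA : ∀ k l, p k → p l → A k l = if k = l then c else 0)
    (hw : ∀ k, ¬ p k → w k = 0) :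
    star w ⬝ᵥ A *ᵥ w = c * (star w ⬝ᵥ w) := by
  have hterm : ∀ k l,
      star (w k) * (A k l * w l) = star (w k) * ((if k = l then c else 0) * w l) := by
    intro k l
    by_cases hk : p k
    · by_cases hl : p l
      · rw [hA k l hk hl]
      · simp [hw l hl]
    · simp [hw k hk]
  simp only [dotProduct, mulVec, Finset.mul_sum, hterm, ite_mul, zero_mul, mul_ite, mul_zero,
    Finset.sum_ite_eq, Finset.mem_univ, if_true, Pi.star_apply]
  exact Finset.sum_congr rfl fun k _ => by ring

end LinearAlgebra

theorem star_dotProduct_self_eq_sum_norm_sq {n 𝕜 : Type*} [Fintype n] [RCLike 𝕜] (w : n → 𝕜) :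
    star w ⬝ᵥ w = ((∑ k, ‖w k‖ ^ 2 : ℝ) : 𝕜) := by
  simp [dotProduct, RCLike.conj_mul]

section PartialDFT

/-- The paper's `F̄`: rows `s, s + d, …, s + (M₀ - 1) d` of the `M × M` DFT matrix, `d = M / M₀`. -/
noncomputable def partialDFT (M M₀ s : ℕ) : Matrix (Fin M₀) (Fin M) ℂ :=
  Matrix.of fun i k => Complex.exp (-2 * Real.pi * Complex.I *
    ((s : ℂ) + ((i : ℕ) : ℂ) * ((M / M₀ : ℕ) : ℂ)) * ((k : ℕ) : ℂ) / (M : ℂ))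

variable {M M₀ : ℕ} (s : ℕ)

theorem star_partialDFT_mul_partialDFT (hdvd : M₀ ∣ M) (i : Fin M₀) (k l : Fin M) :
    star (partialDFT M M₀ s i k) * partialDFT M M₀ s i l =
      Complex.exp (2 * Real.pi * Complex.I * s * ((k : ℤ) - l : ℤ) / M) *
        (Complex.exp (2 * Real.pi * Complex.I / M₀) ^ ((k : ℤ) - l)) ^ (i : ℕ) := by
  have hM : (M : ℂ) ≠ 0 := Nat.cast_ne_zero.2 (Fin.pos k).ne'
  have hMd : ((M / M₀ : ℕ) : ℂ) * M₀ = M := by exact_mod_cast Nat.div_mul_cancel hdvd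
  have hd : ((M / M₀ : ℕ) : ℂ) ≠ 0 := left_ne_zero_of_mul (hMd ▸ hM)
  have hM₀ : (M₀ : ℂ) ≠ 0 := right_ne_zero_of_mul (hMd ▸ hM)
  simp only [partialDFT, of_apply, Complex.star_def, ← Complex.exp_conj, ← Complex.exp_int_mul,
    ← Complex.exp_nat_mul, ← Complex.exp_add]
  congr 1
  simp only [map_div₀, map_mul, map_neg, map_add, Complex.conj_I, map_ofNat, map_natCast,
    Complex.conj_ofReal]
  rw [← hMd]
  field_simp
  push_cast
  ring

theorem partialDFT_conjTranspose_mul_apply (hdvd : M₀ ∣ M) {k l : Fin M}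
    (hk : (k : ℕ) < M₀) (hl : (l : ℕ) < M₀) :
    ((partialDFT M M₀ s)ᴴ * partialDFT M M₀ s) k l = if k = l then (M₀ : ℂ) else 0 := by
  have hζ := Complex.isPrimitiveRoot_exp M₀ (by omega)
  simp only [mul_apply, conjTranspose_apply, star_partialDFT_mul_partialDFT s hdvd,
    ← Finset.mul_sum]
  rw [Fin.sum_univ_eq_sum_range (fun i => (_ ^ ((k : ℤ) - l)) ^ i)]
  split_ifs with hkl
  · simp [hkl]
  · have ht : ¬ (M₀ : ℤ) ∣ (k : ℤ) - l := fun h => hkl <| Fin.ext <| by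
      have := Int.eq_zero_of_abs_lt_dvd h (by rw [abs_lt]; omega)
      omega
    rw [hζ.sum_range_pow_zpow_eq_zero ht, mul_zero]

theorem sum_norm_sq_partialDFT_mulVec (hdvd : M₀ ∣ M) {w : Fin M → ℂ}
    (hw : ∀ k : Fin M, M₀ ≤ (k : ℕ) → w k = 0) :
    ∑ i, ‖(partialDFT M M₀ s *ᵥ w) i‖ ^ 2 = M₀ * ∑ k, ‖w k‖ ^ 2 := by
  have h := dotProduct_mulVec_eq_mul_of_support (p := fun k : Fin M => (k : ℕ) < M₀) (M₀ : ℂ)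
    (fun _ _ hk hl => partialDFT_conjTranspose_mul_apply s hdvd hk hl)
    (fun k hk => hw k (not_lt.1 hk))
  rw [← star_mulVec_dotProduct_mulVec, star_dotProduct_self_eq_sum_norm_sq,
    star_dotProduct_self_eq_sum_norm_sq, ← RCLike.ofReal_natCast, ← RCLike.ofReal_mul,
    RCLike.ofReal_inj] at h
  exact h

end PartialDFT

section Expectation

variable {Ω 𝕜 : Type*} [RCLike 𝕜] [MeasurableSpace Ω] {μ : Measure Ω}

theorem MeasureTheory.MemLp.integrable_norm_sq {E : Type*} [NormedAddCommGroup E] {f : Ω → E}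
    (hf : MemLp f 2 μ) : Integrable (fun ω => ‖f ω‖ ^ 2) μ :=
  (memLp_two_iff_integrable_sq_norm hf.1).1 hf

theorem integral_norm_add_sq_of_indepFun {X Z : Ω → 𝕜} (hXZ : IndepFun X Z μ)
    (hX : MemLp X 2 μ) (hZ : MemLp Z 2 μ) (hZ0 : ∫ ω, Z ω ∂μ = 0) :
    ∫ ω, ‖X ω + Z ω‖ ^ 2 ∂μ = ∫ ω, ‖X ω‖ ^ 2 ∂μ + ∫ ω, ‖Z ω‖ ^ 2 ∂μ := by
  have hcross : Integrable (star X * Z) μ := hX.star.integrable_mul hZ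
  have hcross0 : ∫ ω, (star X * Z) ω ∂μ = 0 := by
    have hind : IndepFun (star X) Z μ := hXZ.comp continuous_star.measurable measurable_id
    rw [hind.integral_mul_eq_mul_integral hX.star.1 hZ.1, hZ0, mul_zero]
  have hre : Integrable (fun ω => 2 * RCLike.re ((star X * Z) ω)) μ := hcross.re.const_mul 2
  have hXre : Integrable (fun ω => ‖X ω‖ ^ 2 + 2 * RCLike.re ((star X * Z) ω)) μ :=
    hX.integrable_norm_sq.add hre
  calc ∫ ω, ‖X ω + Z ω‖ ^ 2 ∂μ
      = ∫ ω, ‖X ω‖ ^ 2 + 2 * RCLike.re ((star X * Z) ω) + ‖Z ω‖ ^ 2 ∂μ := by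
        congr with ω
        rw [norm_add_sq (𝕜 := 𝕜), RCLike.inner_apply']
        rfl
    _ = ∫ ω, ‖X ω‖ ^ 2 ∂μ + ∫ ω, ‖Z ω‖ ^ 2 ∂μ := by
        rw [integral_add hXre hZ.integrable_norm_sq, integral_add hX.integrable_norm_sq hre,
          integral_const_mul, integral_re hcross, hcross0, map_zero, mul_zero, add_zero]

theorem integral_sum_norm_sq_diagonal_mulVec_add {ι : Type*} [Fintype ι] [DecidableEq ι]
    {x z : Ω → ι → 𝕜} (hind : IndepFun x z μ) (hx : ∀ i, MemLp (fun ω => x ω i) 2 μ)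
    (hz : ∀ i, MemLp (fun ω => z ω i) 2 μ) (hz0 : ∀ i, ∫ ω, z ω i ∂μ = 0) (y : ι → 𝕜) :
    ∫ ω, ∑ i, ‖(diagonal (x ω) *ᵥ y) i + z ω i‖ ^ 2 ∂μ
      = ∑ i, ‖y i‖ ^ 2 * ∫ ω, ‖x ω i‖ ^ 2 ∂μ + ∫ ω, ∑ i, ‖z ω i‖ ^ 2 ∂μ := by
  have hxy : ∀ i, MemLp (fun ω => x ω i * y i) 2 μ := fun i => (hx i).mul_const (y i)
  have hxyz : ∀ i, MemLp (fun ω => x ω i * y i + z ω i) 2 μ := fun i => (hxy i).add (hz i)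
  have hcoord : ∀ i, ∫ ω, ‖x ω i * y i + z ω i‖ ^ 2 ∂μ
      = ‖y i‖ ^ 2 * ∫ ω, ‖x ω i‖ ^ 2 ∂μ + ∫ ω, ‖z ω i‖ ^ 2 ∂μ := fun i => by
    have hindi : IndepFun (fun ω => x ω i * y i) (fun ω => z ω i) μ :=
      hind.comp (by fun_prop : Measurable fun u : ι → 𝕜 => u i * y i) (measurable_pi_apply i)
    rw [integral_norm_add_sq_of_indepFun hindi (hxy i) (hz i) (hz0 i)]
    simp only [norm_mul, mul_pow, integral_mul_const, mul_comm]
  simp only [mulVec_diagonal]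
  rw [integral_finsetSum _ fun i _ => (hxyz i).integrable_norm_sq,
    integral_finsetSum _ fun i _ => (hz i).integrable_norm_sq, ← Finset.sum_add_distrib]
  exact Finset.sum_congr rfl fun i _ => hcoord i

end Expectation

theorem stmt_13_general {Ω : Type*} [MeasurableSpace Ω] (μ : Measure Ω)
    (M M₀ N K : ℕ) (hM₀ : 0 < M₀) (hdvd : M₀ ∣ M) (s : ℕ)
    (hK : K ≤ M₀)
    (F : Matrix (Fin M₀) (Fin M) ℂ)
    (hF : ∀ (i : Fin M₀) (k : Fin M),
      F i k = Complex.exp (-2 * Real.pi * Complex.I *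
        ((s : ℂ) + ((i : ℕ) : ℂ) * ((M / M₀ : ℕ) : ℂ)) * ((k : ℕ) : ℂ) / (M : ℂ)))
    (G : Matrix (Fin M) (Fin (N + 1)) ℂ)
    (hG : ∀ i : Fin M, K ≤ (i : ℕ) → ∀ j, G i j = 0)
    (x z : Ω → Fin M₀ → ℂ)
    (hxL : ∀ i, MemLp (fun ω => x ω i) 2 μ)
    (hzL : ∀ i, MemLp (fun ω => z ω i) 2 μ)
    (P σ : ℝ)
    (hxpow : ∀ i, ∫ ω, ‖x ω i‖ ^ 2 ∂μ = P / M)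
    (hind : IndepFun x z μ)
    (hzmean : ∀ i, ∫ ω, z ω i ∂μ = 0)
    (hzpow : ∫ ω, ∑ i, ‖z ω i‖ ^ 2 ∂μ = M₀ * σ ^ 2) :
    ∀ v : Fin (N + 1) → ℂ,
      (((1 / M₀ : ℝ) * ∫ ω, ∑ i,
          ‖(Matrix.diagonal (x ω) *ᵥ (F *ᵥ (G *ᵥ v))) i + z ω i‖ ^ 2 ∂μ : ℝ) : ℂ)
        = ((P / M : ℝ) : ℂ) * (star v ⬝ᵥ (Gᴴ * G) *ᵥ v) + ((σ ^ 2 : ℝ) : ℂ) := by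
  intro v
  obtain rfl : F = partialDFT M M₀ s := Matrix.ext hF
  have hsupp : ∀ k : Fin M, M₀ ≤ (k : ℕ) → (G *ᵥ v) k = 0 := fun k hk => by
    simp [mulVec, dotProduct, hG k (hK.trans hk)]
  have hE := integral_sum_norm_sq_diagonal_mulVec_add hind hxL hzL hzmean
    (partialDFT M M₀ s *ᵥ (G *ᵥ v))
  simp only [hxpow, ← Finset.sum_mul, sum_norm_sq_partialDFT_mulVec s hdvd hsupp, hzpow] at hE
  rw [hE, ← star_mulVec_dotProduct_mulVec, star_dotProduct_self_eq_sum_norm_sq,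
    RCLike.ofReal_eq_complex_ofReal]
  have hM₀' : (M₀ : ℂ) ≠ 0 := Nat.cast_ne_zero.2 hM₀.ne'
  push_cast
  field_simp

/-- Lemma 0 for a fixed channel realization `G`: the expected reference-signal
received power over the `M₀` uniformly spaced subcarriers, under random OFDM
symbols `x` with `E[|x_i|²] = P/M` and independent zero-mean noise `z` with
`E[‖z‖²] = M₀ σ²`, equals `(P/M)·vᴴ Gᴴ G v + σ²` for every IRS reflection
vector `v`. -/
theorem stmt_13 {Ω : Type*} [MeasurableSpace Ω] (μ : Measure Ω)
    [IsProbabilityMeasure μ]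
    (M M₀ N K : ℕ) (hM₀ : 0 < M₀) (hdvd : M₀ ∣ M) (s : ℕ)
    (hs : s < M / M₀) (hK : K ≤ M₀)
    (F : Matrix (Fin M₀) (Fin M) ℂ)
    (hF : ∀ (i : Fin M₀) (k : Fin M),
      F i k = Complex.exp (-2 * Real.pi * Complex.I *
        ((s : ℂ) + ((i : ℕ) : ℂ) * ((M / M₀ : ℕ) : ℂ)) * ((k : ℕ) : ℂ) / (M : ℂ)))
    (G : Matrix (Fin M) (Fin (N + 1)) ℂ)
    (hG : ∀ i : Fin M, K ≤ (i : ℕ) → ∀ j, G i j = 0)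
    (x z : Ω → Fin M₀ → ℂ) (hx : Measurable x) (hz : Measurable z)
    (hxL : ∀ i, MemLp (fun ω => x ω i) 2 μ)
    (hzL : ∀ i, MemLp (fun ω => z ω i) 2 μ)
    (P σ : ℝ) (hP : 0 < P)
    (hxpow : ∀ i, ∫ ω, ‖x ω i‖ ^ 2 ∂μ = P / M)
    (hind : IndepFun x z μ)
    (hzmean : ∀ i, ∫ ω, z ω i ∂μ = 0)
    (hzpow : ∫ ω, ∑ i, ‖z ω i‖ ^ 2 ∂μ = M₀ * σ ^ 2) :
    ∀ v : Fin (N + 1) → ℂ,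
      (((1 / M₀ : ℝ) * ∫ ω, ∑ i,
          ‖(Matrix.diagonal (x ω) *ᵥ (F *ᵥ (G *ᵥ v))) i + z ω i‖ ^ 2 ∂μ : ℝ) : ℂ)
        = ((P / M : ℝ) : ℂ) * (star v ⬝ᵥ (Gᴴ * G) *ᵥ v) + ((σ ^ 2 : ℝ) : ℂ) :=
  stmt_13_general μ M M₀ N K hM₀ hdvd s hK F hF G hG x z hxL hzL P σ hxpow hind hzmean hzpow
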